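/- arXiv:1907.06603 — 3 statements merged into one kernel-verified Lean document; each statement's English description precedes it below -/
import Mathlib

section
/- Let R be a commutative ring and F ∈ R⟨⟨e₀,…,eₙ⟩⟩ an invertible series (i.e., its constant coefficient F_∅ is invertible in R). Writing F = F_∅ + Σⱼ Fⱼeⱼ, the abelianisation of the j-th component of F⁻¹ satisfies: (F⁻¹)_j-bar = −(1/F_∅) · F̄ⱼ / F̄, where the bar denotes the abelianisation map eᵢ ↦ sᵢ, and F̄ is invertible in R[[s₀,…,sₙ]]. -/
/-! Abelianisation turns the concatenation product into the product of commutative power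
series, since the ways of splitting a word of multidegree `d` as `u ++ v` are matched, over the
antidiagonal of `d`, with pairs of words of multidegrees `(p, q)`. Comparing the coefficients
of `w ++ [j]` in `G * F = 1` gives `G (w ++ [j]) * F [] = -(G * Fⱼ) w`, i.e.
`Gⱼ = -F_∅⁻¹ · G * Fⱼ`; abelianising and multiplying by `F̄`, whose inverse is `Ḡ`, gives
the claim. -/

/-- The (concatenation) product of two noncommutative formal power series,
given by their coefficient functions on words. -/
def convMul {α : Type*} {R : Type*} [CommRing R] (A B : List α → R) : List α → R :=
  fun w => ∑ k ∈ Finset.range (w.length + 1), A (w.take k) * B (w.drop k)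

/-- The unit series `1`. -/
def deltaOne {α : Type*} {R : Type*} [CommRing R] : List α → R :=
  fun w => match w with
  | [] => 1
  | _ :: _ => 0

/-- The abelianisation of a noncommutative formal power series. -/
noncomputable def abel {R : Type*} [CommRing R] {m : ℕ} (F : List (Fin m) → R) :
    MvPowerSeries (Fin m) R :=
  fun d : Fin m →₀ ℕ =>
    ∑ g : Fin (d.sum fun _ k => k) → Fin m,
      if ∀ i, (List.ofFn g).count i = d i then F (List.ofFn g) else 0

section NoncommutativeSeries

variable {α R : Type*} [CommRing R]

theorem deltaOne_eq_ite (w : List α) : (deltaOne w : R) = if [] = w then 1 else 0 := by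
  cases w <;> simp [deltaOne]

theorem convMul_append_singleton (A B : List α → R) (w : List α) (a : α) :
    convMul A B (w ++ [a]) = convMul A (fun u => B (u ++ [a])) w + A (w ++ [a]) * B [] := by
  have hlen : (w ++ [a]).length = w.length + 1 := by simp
  rw [convMul, hlen, Finset.sum_range_succ, convMul, ← hlen, List.take_length, List.drop_length]
  congr 1
  refine Finset.sum_congr rfl fun k hk => ?_
  have hkw : k - w.length = 0 := by have := Finset.mem_range.mp hk; omega
  rw [List.take_append, List.drop_append, hkw]
  simp

theorem apply_append_singleton_of_convMul_eq_deltaOne {F G : List α → R} (hu : IsUnit (F []))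
    (hGF : convMul G F = deltaOne) (w : List α) (a : α) :
    G (w ++ [a]) = -Ring.inverse (F []) * convMul G (fun u => F (u ++ [a])) w := by
  have h := congrFun hGF (w ++ [a])
  rw [convMul_append_singleton, deltaOne_eq_ite, if_neg (by simp)] at h
  calc G (w ++ [a]) = G (w ++ [a]) * F [] * Ring.inverse (F []) := by
        rw [mul_assoc, Ring.mul_inverse_cancel _ hu, mul_one]
    _ = _ := by rw [eq_neg_of_add_eq_zero_right h]; ring

end NoncommutativeSeries

namespace List

variable {α : Type*} [DecidableEq α]

noncomputable def letterCount (w : List α) : α →₀ ℕ :=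
  Multiset.toFinsupp (w : Multiset α)

@[simp]
theorem letterCount_apply (w : List α) (a : α) : w.letterCount a = w.count a :=
  Multiset.coe_count a w

@[simp]
theorem letterCount_nil : ([] : List α).letterCount = 0 := Multiset.toFinsupp_zero

theorem letterCount_append (u v : List α) :
    (u ++ v).letterCount = u.letterCount + v.letterCount := by
  rw [letterCount, ← Multiset.coe_add, Multiset.toFinsupp_add]; rfl

theorem length_eq_sum_letterCount (w : List α) :
    w.length = w.letterCount.sum fun _ k => k := by
  have := Finsupp.card_toMultiset w.letterCount
  rw [letterCount, Multiset.toFinsupp_toMultiset, Multiset.coe_card] at this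
  exact this

end List

section

open Finset.HasAntidiagonal

variable {α : Type*} [DecidableEq α]

noncomputable def wordsWithCount (d : α →₀ ℕ) : Finset (List α) :=
  (Finsupp.toMultiset d).lists.toFinset

@[simp]
theorem mem_wordsWithCount {d : α →₀ ℕ} {w : List α} :
    w ∈ wordsWithCount d ↔ w.letterCount = d := by
  rw [wordsWithCount, Multiset.mem_toFinset, Multiset.mem_lists_iff, List.letterCount,
    Multiset.toFinsupp_eq_iff, eq_comm]
  rfl

theorem sum_wordsWithCount_sum_take_drop {M : Type*} [AddCommMonoid M] (d : α →₀ ℕ)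
    (f : List α → List α → M) :
    ∑ w ∈ wordsWithCount d, ∑ k ∈ Finset.range (w.length + 1), f (w.take k) (w.drop k) =
      ∑ p ∈ antidiagonal d, ∑ u ∈ wordsWithCount p.1, ∑ v ∈ wordsWithCount p.2, f u v := by
  simp_rw [← Finset.sum_product', Finset.sum_sigma']
  refine Finset.sum_bij'
    (fun x _ => ⟨((x.1.take x.2).letterCount, (x.1.drop x.2).letterCount),
      (x.1.take x.2, x.1.drop x.2)⟩)
    (fun y _ => ⟨y.2.1 ++ y.2.2, y.2.1.length⟩) ?_ ?_ ?_ ?_ (fun _ _ => rfl)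
  · rintro ⟨w, k⟩ h
    simp only [Finset.mem_sigma, mem_wordsWithCount, Finset.mem_range] at h
    simp [← List.letterCount_append, h.1]
  · rintro ⟨⟨p, q⟩, ⟨u, v⟩⟩ h
    simp only [Finset.mem_sigma, Finset.mem_product, mem_wordsWithCount, mem_antidiagonal] at h
    simp [List.letterCount_append, h.1, h.2.1, h.2.2]
  · rintro ⟨w, k⟩ h
    simp only [Finset.mem_sigma, Finset.mem_range] at h
    simp [Nat.le_of_lt_succ h.2]
  · rintro ⟨⟨p, q⟩, ⟨u, v⟩⟩ h
    simp only [Finset.mem_sigma, Finset.mem_product, mem_wordsWithCount, mem_antidiagonal] at h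
    simp [h.2.1, h.2.2]

end

section Abelianisation

variable {R : Type*} [CommRing R] {m : ℕ}

theorem coeff_abel (F : List (Fin m) → R) (d : Fin m →₀ ℕ) :
    MvPowerSeries.coeff d (abel F) = ∑ w ∈ wordsWithCount d, F w := by
  change abel F d = _
  rw [abel, ← Finset.sum_filter]
  refine Finset.sum_bij (fun g _ => List.ofFn g) ?_ (fun _ _ _ _ h => List.ofFn_injective h) ?_
    (fun _ _ => rfl)
  · intro g hg
    rw [mem_wordsWithCount]
    ext i
    simpa using (Finset.mem_filter.mp hg).2 i
  · intro w hw
    rw [mem_wordsWithCount] at hw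
    have hl : w.length = d.sum fun _ k => k := hw ▸ w.length_eq_sum_letterCount
    have hw' : List.ofFn (fun i : Fin (d.sum fun _ k => k) => w[i.val]) = w :=
      List.ext_get (by simp [hl]) (by simp)
    refine ⟨_, Finset.mem_filter.mpr ⟨Finset.mem_univ _, fun i => ?_⟩, hw'⟩
    rw [hw', ← w.letterCount_apply, hw]

theorem abel_convMul (A B : List (Fin m) → R) : abel (convMul A B) = abel A * abel B := by
  ext d
  simp only [MvPowerSeries.coeff_mul, coeff_abel, convMul, Finset.sum_mul_sum]
  exact sum_wordsWithCount_sum_take_drop d fun u v => A u * B v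

theorem abel_deltaOne : abel (deltaOne : List (Fin m) → R) = 1 := by
  ext d
  rw [coeff_abel, MvPowerSeries.coeff_one]
  simp only [deltaOne_eq_ite, Finset.sum_ite_eq, mem_wordsWithCount, List.letterCount_nil]
  exact if_congr eq_comm rfl rfl

theorem abel_const_mul (c : R) (F : List (Fin m) → R) :
    abel (fun w => c * F w) = MvPowerSeries.C c * abel F := by
  ext d
  simp only [coeff_abel, MvPowerSeries.coeff_C_mul, Finset.mul_sum]

end Abelianisation

theorem stmt10_general {R : Type*} [CommRing R] {n : ℕ}
    (F G : List (Fin (n + 1)) → R) (hu : IsUnit (F []))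
    (hGF : convMul G F = deltaOne) (j : Fin (n + 1)) :
    IsUnit (abel F) ∧
      abel (fun w => G (w ++ [j])) * abel F =
        -(MvPowerSeries.C (σ := Fin (n + 1)) (R := R) (Ring.inverse (F []))) *
          abel (fun w => F (w ++ [j])) := by
  have hGF' : abel G * abel F = 1 := by rw [← abel_convMul, hGF, abel_deltaOne]
  refine ⟨IsUnit.of_mul_eq_one_right _ hGF', ?_⟩
  simp_rw [apply_append_singleton_of_convMul_eq_deltaOne hu hGF, abel_const_mul, abel_convMul,
    map_neg]
  linear_combination (-MvPowerSeries.C (Ring.inverse (F [])) * abel fun w => F (w ++ [j])) * hGF'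

/-- if `F` is invertible (its constant coefficient `F_∅` is a unit in `R`),
with (two-sided) inverse `G = F⁻¹`, then the abelianisation `F̄` is invertible in
`R[[s₀,…,sₙ]]` and `(F⁻¹)ⱼ-bar = −(1/F_∅) · F̄ⱼ / F̄`, equivalently
`(F⁻¹)ⱼ-bar · F̄ = −(1/F_∅) · F̄ⱼ`. -/
theorem stmt10 {R : Type*} [CommRing R] {n : ℕ}
    (F G : List (Fin (n + 1)) → R) (hu : IsUnit (F []))
    (hFG : convMul F G = deltaOne) (hGF : convMul G F = deltaOne) (j : Fin (n + 1)) :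
    IsUnit (abel F) ∧
      abel (fun w => G (w ++ [j])) * abel F =
        -(MvPowerSeries.C (σ := Fin (n + 1)) (R := R) (Ring.inverse (F []))) *
          abel (fun w => F (w ++ [j])) :=
  stmt10_general F G hu hGF j
end

section
/- For Re(c) > Re(b) > 0 and y ∈ ℂ with y ∉ [1,∞), setting 𝓕(a,b,c;y) = ∫₀¹ x^b (1−x)^{c−b}(1−yx)^{−a} dx/(x(1−x)), one has the contiguity relation 𝓕(a,b,c;y) = (c/b)·𝓕(a,b+1,c+1;y) − (a/b)·y·𝓕(a+1,b+1,c+2;y). -/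
/-- `𝓕(a,b,c;y) = ∫₀¹ x^b (1−x)^{c−b} (1−yx)^{−a} dx/(x(1−x))`, with principal branches
(which for `y ∉ [1,∞)` agree with the branches determined by
`log(1−yx) = ∫₀^x d log(1−yu)` along `(0,1)`). -/
noncomputable def calF (a b c y : ℂ) : ℂ :=
  ∫ x in (0:ℝ)..1,
    (x : ℂ) ^ b * (1 - (x : ℂ)) ^ (c - b) * (1 - y * (x : ℂ)) ^ (-a) /
      ((x : ℂ) * (1 - (x : ℂ)))

/-!
In the form `𝓕(a,b,c;y) = ∫₀¹ x^(b-1) (1-x)^(c-b-1) (1-yx)^(-a) dx`, split the integrand with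
`1 = x + (1 - x)`. The term carrying `x^(b-1) (1-x)^(c-b)` is eliminated by integrating the
derivative of `x^b (1-x)^(c-b) (1-yx)^(-a)` over `[0,1]`: it vanishes at both ends because
`Re b > 0` and `Re (c-b) > 0`. Since `y ∉ [1,∞)`, `1 - yx` stays in the slit plane for
`x ∈ [0,1]`, so `(1-yx)^(-a)` is smooth there.
-/

open Complex Set MeasureTheory intervalIntegral

noncomputable def eulerIntegrand (y p q r : ℂ) (x : ℝ) : ℂ :=
  (x : ℂ) ^ p * (1 - (x : ℂ)) ^ q * (1 - y * (x : ℂ)) ^ r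

noncomputable def eulerIntegral (y p q r : ℂ) : ℂ :=
  ∫ x in (0:ℝ)..1, eulerIntegrand y p q r x

section
variable {y : ℂ}

lemma one_sub_mul_ofReal_mem_slitPlane (hy : ∀ t : ℝ, 1 ≤ t → y ≠ (t : ℂ)) {x : ℝ}
    (hx : x ∈ Icc (0:ℝ) 1) : 1 - y * x ∈ slitPlane := by
  rw [mem_slitPlane_iff_not_le_zero]
  intro hle
  obtain ⟨s, hs0, hs⟩ : ∃ s : ℝ, s ≤ 0 ∧ 1 - y * x = s := by
    obtain ⟨hre, him⟩ := Complex.le_def.1 hle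
    exact ⟨(1 - y * x).re, by simpa using hre, Complex.ext (by simp) (by simpa using him.symm)⟩
  rcases hx.1.eq_or_lt with rfl | hx0
  · have : (1 : ℝ) = s := by exact_mod_cast (show (1 : ℂ) = s by simpa using hs)
    linarith
  · refine hy ((1 - s) / x) ((le_div_iff₀ hx0).2 (by linarith [hx.2])) ?_
    have : (x : ℂ) ≠ 0 := by exact_mod_cast hx0.ne'
    push_cast
    rw [← hs]
    field_simp
    ring

lemma continuousOn_one_sub_mul_ofReal_cpow (hy : ∀ t : ℝ, 1 ≤ t → y ≠ (t : ℂ)) (r : ℂ) :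
    ContinuousOn (fun x : ℝ => (1 - y * x) ^ r) (Icc 0 1) := fun _ hx =>
  ((continuous_const.sub (continuous_const.mul continuous_ofReal)).continuousAt.cpow
    continuousAt_const (one_sub_mul_ofReal_mem_slitPlane hy hx)).continuousWithinAt

lemma intervalIntegrable_eulerIntegrand (hy : ∀ t : ℝ, 1 ≤ t → y ≠ (t : ℂ)) {p q : ℂ}
    (hp : -1 < p.re) (hq : -1 < q.re) (r : ℂ) :
    IntervalIntegrable (eulerIntegrand y p q r) volume 0 1 := by
  have h := (betaIntegral_convergent (u := p + 1) (v := q + 1)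
      (by simp; linarith) (by simp; linarith)).mul_continuousOn
      ((continuousOn_one_sub_mul_ofReal_cpow hy r).mono (by rw [uIcc_of_le zero_le_one]))
  unfold eulerIntegrand
  simpa using h

lemma calF_eq_eulerIntegral (a b c : ℂ) :
    calF a b c y = eulerIntegral y (b - 1) (c - b - 1) (-a) := by
  refine integral_congr_Ioo_of_le zero_le_one fun x hx => ?_
  have hx0 : (x : ℂ) ≠ 0 := by exact_mod_cast hx.1.ne'
  have hx1 : (1 : ℂ) - x ≠ 0 := sub_ne_zero.2 (by exact_mod_cast hx.2.ne')
  simp only [eulerIntegrand]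
  rw [cpow_sub b 1 hx0, cpow_one, cpow_sub (c - b) 1 hx1, cpow_one]
  field_simp

lemma eulerIntegral_eq_add (hy : ∀ t : ℝ, 1 ≤ t → y ≠ (t : ℂ)) {p q : ℂ}
    (hp : -1 < p.re) (hq : -1 < q.re) (r : ℂ) :
    eulerIntegral y p q r = eulerIntegral y (p + 1) q r + eulerIntegral y p (q + 1) r := by
  rw [eulerIntegral, eulerIntegral, eulerIntegral, ← integral_add
    (intervalIntegrable_eulerIntegrand hy (by simp; linarith) hq r)
    (intervalIntegrable_eulerIntegrand hy hp (by simp; linarith) r)]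
  refine integral_congr_Ioo_of_le zero_le_one fun x hx => ?_
  have hx0 : (x : ℂ) ≠ 0 := by exact_mod_cast hx.1.ne'
  have hx1 : (1 : ℂ) - x ≠ 0 := sub_ne_zero.2 (by exact_mod_cast hx.2.ne')
  simp only [eulerIntegrand]
  rw [cpow_add _ _ hx0, cpow_one, cpow_add _ _ hx1, cpow_one]
  ring

lemma continuousOn_eulerIntegrand (hy : ∀ t : ℝ, 1 ≤ t → y ≠ (t : ℂ)) {u v : ℂ}
    (hu : 0 < u.re) (hv : 0 < v.re) (r : ℂ) :
    ContinuousOn (eulerIntegrand y u v r) (Icc 0 1) := by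
  refine ContinuousOn.mul ?_ (continuousOn_one_sub_mul_ofReal_cpow hy r)
  refine (continuousOn_of_forall_continuousAt fun x hx => ?_).mul
    (continuousOn_of_forall_continuousAt fun x hx => ?_)
  · exact (continuousAt_cpow_const_of_re_pos (Or.inl (by simpa using hx.1)) hu).comp
      continuous_ofReal.continuousAt
  · exact (continuousAt_cpow_const_of_re_pos (Or.inl (by simpa using hx.2)) hv).comp
      (continuous_const.sub continuous_ofReal).continuousAt

lemma hasDerivAt_eulerIntegrand (hy : ∀ t : ℝ, 1 ≤ t → y ≠ (t : ℂ)) (u v r : ℂ) {x : ℝ}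
    (hx : x ∈ Ioo (0:ℝ) 1) :
    HasDerivAt (eulerIntegrand y u v r)
      (u * eulerIntegrand y (u - 1) v r x - v * eulerIntegrand y u (v - 1) r x
        - r * y * eulerIntegrand y u v (r - 1) x) x := by
  have hX : HasDerivAt (fun z : ℂ => z ^ u) (u * (x : ℂ) ^ (u - 1)) x := by
    simpa using (hasDerivAt_id (x : ℂ)).cpow_const (c := u) (Or.inl (by simpa using hx.1))
  have hY : HasDerivAt (fun z : ℂ => (1 - z) ^ v) (-(v * (1 - (x : ℂ)) ^ (v - 1))) x := by
    simpa using ((hasDerivAt_id (x : ℂ)).const_sub 1).cpow_const (c := v)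
      (Or.inl (by simpa using hx.2))
  have hZ : HasDerivAt (fun z : ℂ => (1 - y * z) ^ r) (-(r * (1 - y * x) ^ (r - 1) * y)) x := by
    simpa using (((hasDerivAt_id (x : ℂ)).const_mul y).const_sub 1).cpow_const (c := r)
      (one_sub_mul_ofReal_mem_slitPlane hy (Ioo_subset_Icc_self hx))
  convert ((hX.mul hY).mul hZ).comp_ofReal using 1
  · rfl
  · simp only [eulerIntegrand, Pi.mul_apply]
    ring

lemma eulerIntegral_by_parts (hy : ∀ t : ℝ, 1 ≤ t → y ≠ (t : ℂ)) {u v : ℂ}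
    (hu : 0 < u.re) (hv : 0 < v.re) (r : ℂ) :
    u * eulerIntegral y (u - 1) v r - v * eulerIntegral y u (v - 1) r
      - r * y * eulerIntegral y u v (r - 1) = 0 := by
  have i₁ := (intervalIntegrable_eulerIntegrand hy (p := u - 1) (q := v)
    (by simp; linarith) (by linarith) r).const_mul u
  have i₂ := (intervalIntegrable_eulerIntegrand hy (p := u) (q := v - 1)
    (by linarith) (by simp; linarith) r).const_mul v
  have i₃ := (intervalIntegrable_eulerIntegrand hy (p := u) (q := v)
    (by linarith) (by linarith) (r - 1)).const_mul (r * y)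
  have ftc := integral_eq_sub_of_hasDerivAt_of_le zero_le_one
    (continuousOn_eulerIntegrand hy hu hv r)
    (fun x hx => hasDerivAt_eulerIntegrand hy u v r hx) ((i₁.sub i₂).sub i₃)
  have at_zero : eulerIntegrand y u v r 0 = 0 := by
    simp [eulerIntegrand, zero_cpow (show u ≠ 0 by rintro rfl; simp at hu)]
  have at_one : eulerIntegrand y u v r 1 = 0 := by
    simp [eulerIntegrand, zero_cpow (show v ≠ 0 by rintro rfl; simp at hv)]
  rw [integral_sub (i₁.sub i₂) i₃, integral_sub i₁ i₂, intervalIntegral.integral_const_mul,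
    intervalIntegral.integral_const_mul, intervalIntegral.integral_const_mul] at ftc
  rwa [at_zero, at_one, sub_zero] at ftc

end

/-- for `Re(c) > Re(b) > 0` and `y ∉ [1,∞)`,
`𝓕(a,b,c;y) = (c/b)·𝓕(a,b+1,c+1;y) − (a/b)·y·𝓕(a+1,b+1,c+2;y)`. -/
theorem stmt13 (a b c y : ℂ) (hb : 0 < b.re) (hbc : b.re < c.re)
    (hy : ∀ t : ℝ, 1 ≤ t → y ≠ (t : ℂ)) :
    calF a b c y =
      c / b * calF a (b + 1) (c + 1) y - a / b * y * calF (a + 1) (b + 1) (c + 2) y := by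
  have hcb : 0 < (c - b).re := by simpa using hbc
  have hb0 : b ≠ 0 := fun h => by simp [h] at hb
  have split := eulerIntegral_eq_add hy (p := b - 1) (q := c - b - 1)
    (by simp; linarith) (by simp; linarith) (-a)
  have parts := eulerIntegral_by_parts hy hb hcb (-a)
  rw [sub_add_cancel, sub_add_cancel] at split
  rw [calF_eq_eulerIntegral, calF_eq_eulerIntegral, calF_eq_eulerIntegral, split,
    show b + 1 - 1 = b by ring, show c + 1 - (b + 1) - 1 = c - b - 1 by ring,
    show c + 2 - (b + 1) - 1 = c - b by ring, show -(a + 1) = -a - 1 by ring]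
  field_simp
  linear_combination parts
end

section
/- For Re(c) > Re(b) > 0 and |y| < 1, the integral ∫₀¹ x^{b−1}(1−x)^{c−b−1}(1−yx)^{−a} dx equals B(b, c−b) · ₂F₁(a,b,c;y), where ₂F₁(a,b,c;y) = Σ_{n≥0} ((a)ₙ(b)ₙ/(c)ₙ)·yⁿ/n! is the Gauss hypergeometric series and (x)ₙ is the rising Pochhammer symbol. -/
/-!
Expand `(1 - y x)^{-a} = ∑ (a)ₙ/n! yⁿ xⁿ` by the binomial series. Since `‖y‖ < 1` the coefficients
`(a)ₙ/n! yⁿ` are absolutely summable, so for `x ∈ [0, 1]` the series is dominated and may be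
integrated termwise against the integrable Beta kernel `x^{b-1} (1-x)^{c-b-1}`. The `n`-th term
becomes `B(b + n, c - b)`, and `Γ(s + n) = (s)ₙ Γ(s)` turns it into `(b)ₙ/(c)ₙ · B(b, c - b)`.
-/

/-- The rising Pochhammer symbol `(a)ₙ = a(a+1)⋯(a+n−1)`. -/
noncomputable def poch (a : ℂ) (n : ℕ) : ℂ := ∏ k ∈ Finset.range n, (a + (k : ℂ))

open MeasureTheory Set
open scoped Nat

lemma poch_eq_ascPochhammer_eval (a : ℂ) (n : ℕ) : poch a n = (ascPochhammer ℂ n).eval a := by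
  induction n with
  | zero => simp [poch]
  | succ n ih => rw [poch, Finset.prod_range_succ, ← poch, ih, ascPochhammer_succ_eval]

lemma poch_ne_zero {z : ℂ} (hz : ∀ k : ℕ, z ≠ -k) (n : ℕ) : poch z n ≠ 0 := by
  rw [poch_eq_ascPochhammer_eval, Ne, ascPochhammer_eval_eq_zero_iff]
  rintro ⟨k, -, hk⟩
  exact hz k (by rw [hk, neg_neg])

lemma Ring.choose_add_sub_one_eq_poch_div_factorial (a : ℂ) (n : ℕ) :
    Ring.choose (a + n - 1) n = poch a n / n ! := by
  rw [← Ring.multichoose_eq, eq_div_iff (by exact_mod_cast n.factorial_ne_zero), mul_comm,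
    ← nsmul_eq_mul, Ring.factorial_nsmul_multichoose_eq_ascPochhammer,
    Polynomial.ascPochhammer_smeval_eq_eval, poch_eq_ascPochhammer_eval]

namespace Complex

lemma ne_neg_natCast_of_re_pos {z : ℂ} (hz : 0 < z.re) (k : ℕ) : z ≠ -k := by
  rintro rfl
  simp only [neg_re, natCast_re, Left.neg_pos_iff] at hz
  exact (Nat.cast_nonneg k).not_gt hz

lemma Gamma_add_nat_eq_poch_mul {z : ℂ} (hz : ∀ k : ℕ, z ≠ -k) (n : ℕ) :
    Gamma (z + n) = poch z n * Gamma z := by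
  rw [poch_eq_ascPochhammer_eval, ← Gamma_add_nat_div_Gamma_eq z hz,
    div_mul_cancel₀ _ (Gamma_ne_zero hz)]

lemma betaIntegral_add_nat_left {u v : ℂ} (hu : 0 < u.re) (hv : 0 < v.re) (n : ℕ) :
    betaIntegral (u + n) v = poch u n / poch (u + v) n * betaIntegral u v := by
  have huv : 0 < (u + v).re := by rw [add_re]; positivity
  have hun : 0 < (u + n).re := by simpa using hu.trans_le (by simp)
  have hpoch : poch (u + v) n ≠ 0 := poch_ne_zero (ne_neg_natCast_of_re_pos huv) n
  have hGamma : Gamma (u + v) ≠ 0 := Gamma_ne_zero_of_re_pos huv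
  rw [betaIntegral_eq_Gamma_mul_div _ _ hun hv, betaIntegral_eq_Gamma_mul_div _ _ hu hv,
    add_right_comm, Gamma_add_nat_eq_poch_mul (ne_neg_natCast_of_re_pos hu),
    Gamma_add_nat_eq_poch_mul (ne_neg_natCast_of_re_pos huv)]
  field_simp

lemma setIntegral_Ioc_cpow_mul_one_sub_cpow_mul_pow (u v : ℂ) (n : ℕ) :
    ∫ x in Ioc (0 : ℝ) 1, (x : ℂ) ^ (u - 1) * (1 - (x : ℂ)) ^ (v - 1) * (x : ℂ) ^ n =
      betaIntegral (u + n) v := by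
  rw [betaIntegral, intervalIntegral.integral_of_le zero_le_one]
  refine setIntegral_congr_fun measurableSet_Ioc fun x hx => ?_
  have hx0 : (x : ℂ) ≠ 0 := ofReal_ne_zero.mpr hx.1.ne'
  rw [show u + n - 1 = u - 1 + n by ring, cpow_add _ _ hx0, cpow_natCast]
  ring

theorem one_sub_cpow_neg_hasFPowerSeriesOnBall_zero (a : ℂ) :
    HasFPowerSeriesOnBall (fun z => (1 - z) ^ (-a))
      (.ofScalars ℂ fun n => poch a n / n !) 0 1 := by
  simpa [cpow_neg, Ring.choose_add_sub_one_eq_poch_div_factorial] using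
    one_div_one_sub_cpow_hasFPowerSeriesOnBall_zero a

end Complex

lemma hasSum_poch_div_factorial_mul_pow (a : ℂ) {z : ℂ} (hz : ‖z‖ < 1) :
    HasSum (fun n => poch a n / n ! * z ^ n) ((1 - z) ^ (-a)) := by
  have h := (Complex.one_sub_cpow_neg_hasFPowerSeriesOnBall_zero a).hasSum
    (y := z) (by simpa [← ofReal_norm] using hz)
  simpa [FormalMultilinearSeries.ofScalars_apply_eq, mul_comm] using h

lemma summable_norm_poch_div_factorial_mul_pow (a : ℂ) {z : ℂ} (hz : ‖z‖ < 1) :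
    Summable fun n => ‖poch a n / n ! * z ^ n‖ := by
  have h := (FormalMultilinearSeries.ofScalars ℂ fun n => poch a n / n !).summable_norm_mul_pow
    (r := ‖z‖₊) ((ENNReal.coe_lt_one_iff.mpr hz).trans_le
      (Complex.one_sub_cpow_neg_hasFPowerSeriesOnBall_zero a).r_le)
  simpa [FormalMultilinearSeries.ofScalars_norm] using h

lemma one_sub_mul_cpow_neg_eq_tsum (a : ℂ) {y : ℂ} (hy : ‖y‖ < 1) {x : ℝ} (hx : x ∈ Icc 0 1) :
    (1 - y * x) ^ (-a) = ∑' n, poch a n / n ! * y ^ n * (x : ℂ) ^ n := by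
  have hyx : ‖y * x‖ < 1 := by
    rw [norm_mul, Complex.norm_real, Real.norm_of_nonneg hx.1]
    exact (mul_le_of_le_one_right (norm_nonneg y) hx.2).trans_lt hy
  simp_rw [mul_assoc, ← mul_pow]
  exact (hasSum_poch_div_factorial_mul_pow a hyx).tsum_eq.symm

theorem MeasureTheory.integral_mul_tsum_mul_pow {α : Type*} [MeasurableSpace α] {μ : Measure α}
    {f g : α → ℂ} (hf : Integrable f μ) (hg : AEStronglyMeasurable g μ)
    (hg_le : ∀ᵐ x ∂μ, ‖g x‖ ≤ 1) {c : ℕ → ℂ} (hc : Summable fun n => ‖c n‖) :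
    ∫ x, f x * ∑' n, c n * g x ^ n ∂μ = ∑' n, c n * ∫ x, f x * g x ^ n ∂μ := by
  have hpow_le : ∀ n, ∀ᵐ x ∂μ, ‖g x ^ n‖ ≤ 1 := fun n => hg_le.mono fun x hx => by
    simpa [norm_pow] using pow_le_one₀ (norm_nonneg _) hx
  have hint : ∀ n, Integrable (fun x => f x * g x ^ n) μ := fun n =>
    hf.mul_bdd (hg.pow n) (hpow_le n)
  have hnorm_le : ∀ n, ∫ x, ‖c n * (f x * g x ^ n)‖ ∂μ ≤ ‖c n‖ * ∫ x, ‖f x‖ ∂μ := fun n => by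
    rw [← integral_const_mul]
    refine integral_mono_ae ((hint n).const_mul (c n)).norm (hf.norm.const_mul _) ?_
    filter_upwards [hpow_le n] with x hx
    simp only [norm_mul]
    gcongr
    exact mul_le_of_le_one_right (norm_nonneg _) hx
  calc ∫ x, f x * ∑' n, c n * g x ^ n ∂μ = ∫ x, ∑' n, c n * (f x * g x ^ n) ∂μ := by
        congr! 2 with x
        rw [← tsum_mul_left]
        exact tsum_congr fun n => by ring
    _ = ∑' n, ∫ x, c n * (f x * g x ^ n) ∂μ :=
        (integral_tsum_of_summable_integral_norm (fun n => (hint n).const_mul (c n))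
          ((hc.mul_right _).of_nonneg_of_le (fun n => integral_nonneg fun x => norm_nonneg _)
            hnorm_le)).symm
    _ = ∑' n, c n * ∫ x, f x * g x ^ n ∂μ := by simp_rw [integral_const_mul]

/-- for `Re(c) > Re(b) > 0` and `|y| < 1`,
`∫₀¹ x^{b−1}(1−x)^{c−b−1}(1−yx)^{−a} dx = B(b, c−b) · ₂F₁(a,b,c;y)`, with
`₂F₁(a,b,c;y) = Σₙ ((a)ₙ(b)ₙ/(c)ₙ) yⁿ/n!` and `B(x,y) = Γ(x)Γ(y)/Γ(x+y)`. -/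
theorem stmt15 (a b c y : ℂ) (hb : 0 < b.re) (hbc : b.re < c.re)
    (hy : ‖y‖ < 1) :
    ∫ x in (0:ℝ)..1,
        (x : ℂ) ^ (b - 1) * (1 - (x : ℂ)) ^ (c - b - 1) * (1 - y * (x : ℂ)) ^ (-a) =
      (Complex.Gamma b * Complex.Gamma (c - b) / Complex.Gamma c) *
        ∑' n : ℕ, poch a n * poch b n / poch c n * y ^ n / (n.factorial : ℂ) := by
  have hcb : 0 < (c - b).re := by rw [Complex.sub_re]; linarith
  have hc : 0 < c.re := hb.trans hbc
  have hkernel : IntegrableOn (fun x : ℝ => (x : ℂ) ^ (b - 1) * (1 - (x : ℂ)) ^ (c - b - 1))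
      (Ioc 0 1) :=
    (intervalIntegrable_iff_integrableOn_Ioc_of_le zero_le_one).mp
      (Complex.betaIntegral_convergent hb hcb)
  have hx_le : ∀ᵐ x : ℝ ∂volume.restrict (Ioc 0 1), ‖(x : ℂ)‖ ≤ 1 :=
    (ae_restrict_iff' measurableSet_Ioc).mpr <| ae_of_all _ fun x hx => by
      simpa [abs_of_pos hx.1] using hx.2
  calc _ = ∫ x in Ioc (0 : ℝ) 1, (x : ℂ) ^ (b - 1) * (1 - (x : ℂ)) ^ (c - b - 1) *
          ∑' n, poch a n / n ! * y ^ n * (x : ℂ) ^ n := by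
        rw [intervalIntegral.integral_of_le zero_le_one]
        refine setIntegral_congr_fun measurableSet_Ioc fun x hx => ?_
        rw [one_sub_mul_cpow_neg_eq_tsum a hy (Ioc_subset_Icc_self hx)]
    _ = ∑' n, poch a n / n ! * y ^ n * Complex.betaIntegral (b + n) (c - b) := by
        rw [integral_mul_tsum_mul_pow hkernel (by fun_prop) hx_le
          (summable_norm_poch_div_factorial_mul_pow a hy)]
        simp_rw [Complex.setIntegral_Ioc_cpow_mul_one_sub_cpow_mul_pow]
    _ = _ := by
        rw [← tsum_mul_left]
        refine tsum_congr fun n => ?_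
        have hpoch : poch c n ≠ 0 := poch_ne_zero (Complex.ne_neg_natCast_of_re_pos hc) n
        have hGamma : Complex.Gamma c ≠ 0 := Complex.Gamma_ne_zero_of_re_pos hc
        rw [Complex.betaIntegral_add_nat_left hb hcb, add_sub_cancel,
          Complex.betaIntegral_eq_Gamma_mul_div _ _ hb hcb, add_sub_cancel]
        field_simp
end
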